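/- arXiv:1808.09444 — 8 statements merged into one kernel-verified Lean document; each statement's English description precedes it below -/
import Mathlib

section
/- Let P be an n×n row substochastic matrix (all entries nonnegative and each row sum at most 1) whose spectral radius is strictly less than one, and let C = (I − Pᵀ)⁻¹. Then each diagonal entry of C is a maximal element of its row: for all indices m and l, C_{m,l} ≤ C_{m,m}. -/
/-!
Since the spectral radius of `P` is below one, `Pᵏ → 0`, so `1 - P` is invertible and
`(1 - P)⁻¹ = ∑ₖ Pᵏ`; moreover `(1 - Pᵀ)⁻¹ m l = (1 - P)⁻¹ l m`. It therefore suffices to show that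
the partial sums `∑_{k<N} (Pᵏ) j m` are largest at `j = m`. This follows by induction on `N`:
for `j ≠ m`, splitting off the first step writes the sum of length `N + 1` at `j` as a
substochastic combination `∑ᵢ P j i` of the sums of length `N` at the indices `i`.
-/

open Matrix Filter Finset Topology

theorem spectrum.tendsto_pow_atTop_nhds_zero_of_spectralRadius_lt_one {A : Type*} [NormedRing A]
    [NormedAlgebra ℂ A] [CompleteSpace A] {a : A} (h : spectralRadius ℂ a < 1) :
    Tendsto (a ^ ·) atTop (𝓝 0) := by
  obtain ⟨r, hρr, hr1⟩ := ENNReal.lt_iff_exists_nnreal_btwn.1 h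
  have hbound : ∀ᶠ k : ℕ in atTop, ‖a ^ k‖ ≤ r ^ k := by
    filter_upwards [(pow_nnnorm_pow_one_div_tendsto_nhds_spectralRadius a).eventually_lt_const hρr,
      eventually_gt_atTop 0] with k hk hk0
    rw [one_div, ← ENNReal.coe_rpow_of_nonneg _ (by positivity), ENNReal.coe_lt_coe,
      NNReal.rpow_inv_lt_iff (by positivity), NNReal.rpow_natCast] at hk
    exact_mod_cast hk.le
  exact squeeze_zero_norm' hbound
    (tendsto_pow_atTop_nhds_zero_of_lt_one r.coe_nonneg (by exact_mod_cast hr1))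

namespace Matrix

variable {ι : Type*} [Fintype ι] [DecidableEq ι]

theorem tendsto_pow_atTop_nhds_zero_of_forall_norm_lt_one {A : Matrix ι ι ℂ}
    (h : ∀ μ ∈ spectrum ℂ A, ‖μ‖ < 1) : Tendsto (A ^ ·) atTop (𝓝 0) := by
  -- The auxiliary ∞-operator norm induces the product topology of `Matrix`.
  let := Matrix.linftyOpNormedRing (n := ι) (α := ℂ)
  let := Matrix.linftyOpNormedAlgebra (n := ι) (R := ℂ) (α := ℂ)
  have : CompleteSpace (Matrix ι ι ℂ) := FiniteDimensional.complete ℂ _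
  cases isEmpty_or_nonempty ι
  · exact tendsto_const_nhds.congr fun k => Subsingleton.elim _ _
  refine spectrum.tendsto_pow_atTop_nhds_zero_of_spectralRadius_lt_one ?_
  simpa using spectrum.spectralRadius_lt_of_forall_lt A (r := 1) fun μ hμ => by
    simpa [← NNReal.coe_lt_coe] using h μ hμ

theorem tendsto_pow_atTop_nhds_zero_of_forall_norm_lt_one_map_ofReal {P : Matrix ι ι ℝ}
    (h : ∀ μ ∈ spectrum ℂ (P.map (fun x => (x : ℂ))), ‖μ‖ < 1) :
    Tendsto (P ^ ·) atTop (𝓝 0) := by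
  have hP (k : ℕ) : P ^ k = (P.map (fun x => (x : ℂ)) ^ k).map Complex.re := by
    rw [show (fun x : ℝ => (x : ℂ)) = Complex.ofRealHom from rfl, ← Matrix.map_pow, Matrix.map_map]
    ext; simp
  have hre : Tendsto (fun M : Matrix ι ι ℂ => M.map Complex.re) (𝓝 0) (𝓝 0) := by
    simpa using (continuous_id.matrix_map Complex.continuous_re).tendsto 0
  exact (hre.comp (tendsto_pow_atTop_nhds_zero_of_forall_norm_lt_one h)).congr fun k =>
    (hP k).symm

theorem isUnit_one_sub_of_tendsto_pow_nhds_zero {K : Type*} [Field K] [TopologicalSpace K]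
    [IsTopologicalRing K] [T1Space K] {A : Matrix ι ι K} (h : Tendsto (A ^ ·) atTop (𝓝 0)) :
    IsUnit (1 - A) := by
  have hdet : Tendsto (fun k => (1 - A ^ k).det) atTop (𝓝 1) := by
    simpa [Function.comp_def] using
      (((continuous_const (y := (1 : Matrix ι ι K))).sub continuous_id).matrix_det.tendsto 0).comp h
  obtain ⟨k, hk⟩ := (hdet.eventually_ne one_ne_zero).exists
  rw [← geom_sum_mul_neg, det_mul] at hk
  exact (isUnit_iff_isUnit_det _).2 (right_ne_zero_of_mul hk).isUnit

theorem tendsto_sum_range_pow_nhds_inv_one_sub {R : Type*} [CommRing R] [TopologicalSpace R]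
    [IsTopologicalRing R] {A : Matrix ι ι R} (h : Tendsto (A ^ ·) atTop (𝓝 0))
    (hA : IsUnit (1 - A)) :
    Tendsto (fun N => ∑ k ∈ range N, A ^ k) atTop (𝓝 (1 - A)⁻¹) := by
  have hlim : Tendsto (fun N => (1 - A ^ N) * (1 - A)⁻¹) atTop (𝓝 ((1 - 0) * (1 - A)⁻¹)) :=
    (tendsto_const_nhds.sub h).mul_const _
  rw [sub_zero, one_mul] at hlim
  refine hlim.congr fun N => ?_
  rw [← geom_sum_mul_neg, mul_assoc, mul_nonsing_inv _ ((isUnit_iff_isUnit_det _).1 hA), mul_one]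

theorem sum_range_pow_apply_le_apply_diag {R : Type*} [Semiring R] [PartialOrder R]
    [IsOrderedRing R] {P : Matrix ι ι R} (hnonneg : ∀ i j, 0 ≤ P i j)
    (hrowsum : ∀ i, ∑ j, P i j ≤ 1) (m : ι) (N : ℕ) (j : ι) :
    ∑ k ∈ range N, (P ^ k) j m ≤ ∑ k ∈ range N, (P ^ k) m m := by
  induction N generalizing j with
  | zero => simp
  | succ N ih =>
    obtain rfl | hj := eq_or_ne j m
    · exact le_rfl
    have hfirst_step :
        ∑ k ∈ range (N + 1), (P ^ k) j m = ∑ i, P j i * ∑ k ∈ range N, (P ^ k) i m := by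
      simp only [sum_range_succ', pow_succ', mul_apply, pow_zero, one_apply_ne hj, add_zero,
        mul_sum]
      exact sum_comm
    have hmono : ∑ k ∈ range N, (P ^ k) m m ≤ ∑ k ∈ range (N + 1), (P ^ k) m m :=
      sum_le_sum_of_subset_of_nonneg (range_subset_range.2 N.le_succ) fun k _ _ =>
        pow_apply_nonneg hnonneg k m m
    calc ∑ k ∈ range (N + 1), (P ^ k) j m
        = ∑ i, P j i * ∑ k ∈ range N, (P ^ k) i m := hfirst_step
      _ ≤ ∑ i, P j i * ∑ k ∈ range N, (P ^ k) m m :=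
        sum_le_sum fun i _ => mul_le_mul_of_nonneg_left (ih i) (hnonneg j i)
      _ = (∑ i, P j i) * ∑ k ∈ range N, (P ^ k) m m := (sum_mul ..).symm
      _ ≤ ∑ k ∈ range N, (P ^ k) m m :=
        mul_le_of_le_one_left (sum_nonneg fun k _ => pow_apply_nonneg hnonneg k m m) (hrowsum j)
      _ ≤ ∑ k ∈ range (N + 1), (P ^ k) m m := hmono

theorem inv_one_sub_apply_le_apply_diag {K : Type*} [Field K] [LinearOrder K]
    [IsStrictOrderedRing K] [TopologicalSpace K] [IsTopologicalRing K] [OrderClosedTopology K]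
    {P : Matrix ι ι K} (hnonneg : ∀ i j, 0 ≤ P i j) (hrowsum : ∀ i, ∑ j, P i j ≤ 1)
    (hpow : Tendsto (P ^ ·) atTop (𝓝 0)) (j m : ι) :
    (1 - P)⁻¹ j m ≤ (1 - P)⁻¹ m m := by
  have hsum := tendsto_sum_range_pow_nhds_inv_one_sub hpow
    (isUnit_one_sub_of_tendsto_pow_nhds_zero hpow)
  have hentry (i : ι) :
      Tendsto (fun N => ∑ k ∈ range N, (P ^ k) i m) atTop (𝓝 ((1 - P)⁻¹ i m)) := by
    simpa only [Function.comp_def, id, sum_apply] using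
      ((continuous_id.matrix_elem i m).tendsto _).comp hsum
  exact le_of_tendsto_of_tendsto' (hentry j) (hentry m)
    (sum_range_pow_apply_le_apply_diag hnonneg hrowsum m · j)

end Matrix

/-- If `P` is a row substochastic `n × n` matrix (nonnegative entries,
row sums at most `1`) with spectral radius strictly less than one, then every diagonal
entry of `C = (I - Pᵀ)⁻¹` is a maximal element of its row. -/
theorem diagonal_entries_maximal
    {n : ℕ} (P : Matrix (Fin n) (Fin n) ℝ)
    (hnonneg : ∀ i j, 0 ≤ P i j)
    (hrowsum : ∀ i, ∑ j, P i j ≤ 1)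
    (hspec : ∀ μ ∈ spectrum ℂ (P.map (fun x => (x : ℂ))), ‖μ‖ < 1)
    (m l : Fin n) :
    (1 - Pᵀ)⁻¹ m l ≤ (1 - Pᵀ)⁻¹ m m := by
  rw [← transpose_one, ← transpose_sub, ← transpose_nonsing_inv, transpose_apply, transpose_apply]
  exact inv_one_sub_apply_le_apply_diag hnonneg hrowsum
    (tendsto_pow_atTop_nhds_zero_of_forall_norm_lt_one_map_ofReal hspec) l m
end

section
/- Let P be an n×n row substochastic matrix (all entries nonnegative and each row sum at most 1) whose spectral radius is strictly less than one. Then det(I − Pᵀ) > 0. -/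
/-!
Along the segment `t ↦ 1 - t • P`, `t ∈ [0, 1]`, the determinant starts at `1` and can never
vanish: `det (1 - t • P) = 0` with `t ≠ 0` makes `t⁻¹`, of modulus at least `1`, an eigenvalue
of `P`. By continuity `det (1 - P) > 0`, and `det (1 - Pᵀ) = det (1 - P)`.
-/

open Matrix Set

theorem IsPreconnected.pos_of_pos_of_ne_zero {X : Type*} [TopologicalSpace X] {s : Set X}
    (hs : IsPreconnected s) {f : X → ℝ} (hf : ContinuousOn f s) (hne : ∀ x ∈ s, f x ≠ 0)
    {a b : X} (ha : a ∈ s) (hb : b ∈ s) (hfa : 0 < f a) : 0 < f b := by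
  by_contra! hfb
  obtain ⟨x, hx, hfx⟩ := hs.intermediate_value hb ha hf ⟨hfb, hfa.le⟩
  exact hne x hx hfx

namespace Matrix

variable {ι : Type*} [Fintype ι] [DecidableEq ι]

theorem det_one_sub_smul_eq_zero_iff {K : Type*} [Field K] (A : Matrix ι ι K) {c : K}
    (hc : c ≠ 0) : (1 - c • A).det = 0 ↔ c⁻¹ ∈ spectrum K A := by
  have hfactor : 1 - c • A = c • (algebraMap K (Matrix ι ι K) c⁻¹ - A) := by
    rw [Algebra.algebraMap_eq_smul_one, smul_sub, smul_smul, mul_inv_cancel₀ hc, one_smul]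
  rw [hfactor, det_smul, spectrum.mem_iff, isUnit_iff_isUnit_det, isUnit_iff_ne_zero, not_not]
  simp [hc]

theorem det_one_sub_smul_ne_zero_of_norm_spectrum_lt_one (A : Matrix ι ι ℝ)
    (hA : ∀ μ ∈ spectrum ℂ (A.map (fun x => (x : ℂ))), ‖μ‖ < 1) {t : ℝ} (ht : |t| ≤ 1) :
    (1 - t • A).det ≠ 0 := by
  rcases eq_or_ne t 0 with rfl | ht0
  · simp
  intro hdet
  have hmap :
      Complex.ofRealHom.mapMatrix (1 - t • A) = 1 - (t : ℂ) • A.map (fun x => (x : ℂ)) := by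
    rw [map_sub, map_one, RingHom.mapMatrix_apply, map_smul' _ _ _ (map_mul _)]
    rfl
  have hdetC : (1 - (t : ℂ) • A.map (fun x => (x : ℂ))).det = 0 := by
    rw [← hmap, ← RingHom.map_det, hdet, map_zero]
  have hmem := hA _ ((det_one_sub_smul_eq_zero_iff _ (by exact_mod_cast ht0)).1 hdetC)
  rw [norm_inv, Complex.norm_real, Real.norm_eq_abs] at hmem
  exact (one_le_inv₀ (abs_pos.2 ht0)).2 ht |>.not_gt hmem

theorem det_one_sub_pos_of_norm_spectrum_lt_one (A : Matrix ι ι ℝ)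
    (hA : ∀ μ ∈ spectrum ℂ (A.map (fun x => (x : ℂ))), ‖μ‖ < 1) : 0 < (1 - A).det := by
  have hcont : Continuous fun t : ℝ => (1 - t • A).det := by fun_prop
  have hne : ∀ t ∈ Icc (0 : ℝ) 1, (1 - t • A).det ≠ 0 := fun t ht =>
    det_one_sub_smul_ne_zero_of_norm_spectrum_lt_one A hA
      (abs_le.2 ⟨by linarith [ht.1], ht.2⟩)
  simpa using isPreconnected_Icc.pos_of_pos_of_ne_zero hcont.continuousOn hne
    (left_mem_Icc.2 zero_le_one) (right_mem_Icc.2 zero_le_one) (by simp)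

end Matrix

theorem det_one_sub_transpose_pos_general
    {n : ℕ} (P : Matrix (Fin n) (Fin n) ℝ)
    (hspec : ∀ μ ∈ spectrum ℂ (P.map (fun x => (x : ℂ))), ‖μ‖ < 1) :
    0 < (1 - Pᵀ).det := by
  rw [← transpose_one, ← transpose_sub, det_transpose]
  exact det_one_sub_pos_of_norm_spectrum_lt_one P hspec

/-- If `P` is a row substochastic `n × n` matrix (nonnegative entries,
row sums at most `1`) with spectral radius strictly less than one, then
`det (I - Pᵀ) > 0`. -/
theorem det_one_sub_transpose_pos
    {n : ℕ} (P : Matrix (Fin n) (Fin n) ℝ)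
    (hnonneg : ∀ i j, 0 ≤ P i j)
    (hrowsum : ∀ i, ∑ j, P i j ≤ 1)
    (hspec : ∀ μ ∈ spectrum ℂ (P.map (fun x => (x : ℂ))), ‖μ‖ < 1) :
    0 < (1 - Pᵀ).det :=
  det_one_sub_transpose_pos_general P hspec
end

section
/- Let Q be an n×n column substochastic matrix (all entries nonnegative and each column sum at most 1). Then det(I − Q) ≥ 0. -/
/-!
The path `t ↦ det (1 - t • Q)` on `[0, 1]` starts at `1`, and for `t < 1` the matrix `1 - t • Q` is
strictly diagonally dominant by columns, so its determinant does not vanish (Gershgorin). By the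
intermediate value theorem the determinant cannot have become negative at `t = 1`.
-/

open Matrix

theorem Matrix.det_one_sub_ne_zero_of_sum_col_norm_lt_one {K ι : Type*} [NormedField K]
    [Fintype ι] [DecidableEq ι] (A : Matrix ι ι K) (h : ∀ j, ∑ i, ‖A i j‖ < 1) :
    (1 - A).det ≠ 0 := by
  refine det_ne_zero_of_sum_col_lt_diag fun k => ?_
  have hoff : ∀ i ∈ Finset.univ.erase k, ‖(1 - A) i k‖ = ‖A i k‖ := fun i hi => by
    rw [sub_apply, one_apply_ne (Finset.ne_of_mem_erase hi), zero_sub, norm_neg]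
  calc ∑ i ∈ Finset.univ.erase k, ‖(1 - A) i k‖
      = ∑ i, ‖A i k‖ - ‖A k k‖ := by
        rw [Finset.sum_congr rfl hoff, Finset.sum_erase_eq_sub (Finset.mem_univ k)]
    _ < 1 - ‖A k k‖ := by linarith [h k]
    _ ≤ ‖(1 - A) k k‖ := by
        simpa [sub_apply] using norm_sub_norm_le (1 : K) (A k k)

theorem nonneg_of_continuousOn_of_ne_zero_on_Ico {f : ℝ → ℝ} {a b : ℝ} (hab : a ≤ b)
    (hf : ContinuousOn f (Set.Icc a b)) (ha : 0 ≤ f a) (hne : ∀ t ∈ Set.Ico a b, f t ≠ 0) :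
    0 ≤ f b := by
  by_contra! hb
  obtain ⟨t, ht, hft⟩ := intermediate_value_Icc' hab hf ⟨hb.le, ha⟩
  rcases ht.2.lt_or_eq with htb | rfl
  · exact hne t ⟨ht.1, htb⟩ hft
  · exact hb.ne hft

/-- If `Q` is a column substochastic `n × n` matrix (nonnegative entries,
column sums at most `1`), then `det (I - Q) ≥ 0`. -/
theorem det_one_sub_nonneg_of_column_substochastic
    {n : ℕ} (Q : Matrix (Fin n) (Fin n) ℝ)
    (hnonneg : ∀ i j, 0 ≤ Q i j)
    (hcolsum : ∀ j, ∑ i, Q i j ≤ 1) :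
    0 ≤ (1 - Q).det := by
  have hcont : Continuous fun t : ℝ => (1 - t • Q).det := by fun_prop
  have hne : ∀ t ∈ Set.Ico (0 : ℝ) 1, (1 - t • Q).det ≠ 0 := by
    rintro t ⟨ht0, ht1⟩
    refine det_one_sub_ne_zero_of_sum_col_norm_lt_one _ fun j => ?_
    calc ∑ i, ‖(t • Q) i j‖ = t * ∑ i, Q i j := by
          rw [Finset.mul_sum]
          refine Finset.sum_congr rfl fun i _ => ?_
          rw [Matrix.smul_apply, smul_eq_mul, Real.norm_of_nonneg (mul_nonneg ht0 (hnonneg i j))]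
      _ ≤ t := mul_le_of_le_one_right ht0 (hcolsum j)
      _ < 1 := ht1
  simpa using nonneg_of_continuousOn_of_ne_zero_on_Ico zero_le_one hcont.continuousOn
    (by simp) hne
end

section
/- Let P = (p_{lm}) be an n×n row substochastic matrix (all entries nonnegative and each row sum at most 1) with spectral radius strictly less than one. Then for every index m: p_{m·}((I−P)(m|m))⁻¹ p_{·m} / (1 − p_{mm} − p_{m·}((I−P)(m|m))⁻¹ p_{·m}) = Σ_{k≠m} p_{km} f_{mk}((I−P)(k|k))⁻¹ p_{·k} / (1 − p_{kk} − p_{k·}((I−P)(k|k))⁻¹ p_{·k}). -/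
open Matrix

/-- The `l`-th column of `B` with its `l`-th entry deleted (a vector in `ℝⁿ`). -/
def delCol {n : ℕ} (B : Matrix (Fin (n + 1)) (Fin (n + 1)) ℝ) (l : Fin (n + 1)) :
    Fin n → ℝ :=
  fun i => B (l.succAbove i) l

/-- The `l`-th row of `B` with its `l`-th entry deleted (a row vector in `ℝⁿ`). -/
def delRow {n : ℕ} (B : Matrix (Fin (n + 1)) (Fin (n + 1)) ℝ) (l : Fin (n + 1)) :
    Fin n → ℝ :=
  fun j => B l (l.succAbove j)

/-- `B(i|j)`: the matrix obtained from `B` by deleting row `i` and column `j`. -/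
def delMat {n : ℕ} (B : Matrix (Fin (n + 1)) (Fin (n + 1)) ℝ) (i j : Fin (n + 1)) :
    Matrix (Fin n) (Fin n) ℝ :=
  B.submatrix i.succAbove j.succAbove

/-- `f m l` (for `m ≠ l`): the standard basis row vector of `ℝⁿ` selecting the
coordinate corresponding to the original index `m` after index `l` has been deleted;
it equals `eₘ` if `m < l` and `e_{m-1}` if `m > l`. -/
def fSel {n : ℕ} (m l : Fin (n + 1)) : Fin n → ℝ :=
  fun j => if l.succAbove j = m then 1 else 0

/-!
Write `Q = (I - P)⁻¹`. Solving `(I - P) Q = I` for the `k`-th column of `Q` by Schur complements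
gives `Q_kk = 1 / (1 - p_kk - p_k·((I-P)(k|k))⁻¹p_·k)` and, off the diagonal,
`Q_lk = Q_kk · (((I-P)(k|k))⁻¹p_·k)_l`. Hence the left side equals `Q_mm (1 - p_mm) - 1`, the
`k`-th summand equals `Q_mk p_km`, and the identity is the `(m, m)` entry of `Q P = Q - I`.

The inverses exist because `P ≥ 0` and `Pᵏ → 0` (Gelfand's formula): if `S` is a principal
submatrix of `P` and `S v = v`, then `w = |v|` extended by zero satisfies `0 ≤ w ≤ P w`, hence
`w ≤ Pᵏ w → 0`.
-/

open Filter Topology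

theorem tendsto_pow_nhds_zero_of_spectralRadius_lt_one {A : Type*} [NormedRing A]
    [NormedAlgebra ℂ A] [CompleteSpace A] {a : A} (h : spectralRadius ℂ a < 1) :
    Tendsto (fun n => a ^ n) atTop (𝓝 0) := by
  obtain ⟨r, hρr, hr1⟩ := ENNReal.lt_iff_exists_nnreal_btwn.mp h
  have hbound : ∀ᶠ n : ℕ in atTop, ‖a ^ n‖ ≤ (r : ℝ) ^ n := by
    filter_upwards [(spectrum.gelfand_formula a).eventually (gt_mem_nhds hρr),
      eventually_gt_atTop 0] with n hn hn0
    rw [one_div, ENNReal.rpow_inv_lt_iff (by positivity), ENNReal.rpow_natCast] at hn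
    exact_mod_cast hn.le
  refine tendsto_zero_iff_norm_tendsto_zero.mpr
    (squeeze_zero' (Eventually.of_forall fun _ => norm_nonneg _) hbound ?_)
  exact tendsto_pow_atTop_nhds_zero_of_lt_one r.2 (mod_cast hr1)

theorem Matrix.tendsto_pow_nhds_zero_of_forall_norm_spectrum_lt_one {ι : Type*} [Fintype ι]
    [DecidableEq ι] [Nonempty ι] (P : Matrix ι ι ℝ)
    (hspec : ∀ μ ∈ spectrum ℂ (P.map (fun x => (x : ℂ))), ‖μ‖ < 1) :
    Tendsto (fun k => P ^ k) atTop (𝓝 0) := by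
  have hC : Tendsto (fun k => P.map (fun x => (x : ℂ)) ^ k) atTop (𝓝 0) := by
    let := Matrix.linftyOpNormedRing (n := ι) (α := ℂ)
    let := Matrix.linftyOpNormedAlgebra (n := ι) (α := ℂ) (R := ℂ)
    exact tendsto_pow_nhds_zero_of_spectralRadius_lt_one
      (spectrum.spectralRadius_lt_of_forall_lt _ fun z hz => mod_cast hspec z hz)
  have hre := ((continuous_id.matrix_map Complex.continuous_re).tendsto 0).comp hC
  have hmap : ∀ k, ((P.map (fun x => (x : ℂ))) ^ k).map Complex.re = P ^ k := fun k => by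
    change (Complex.ofRealHom.mapMatrix P ^ k).map Complex.re = P ^ k
    rw [← map_pow, RingHom.mapMatrix_apply, Matrix.map_map]
    exact Matrix.map_id' _
  simpa [Function.comp_def, hmap] using hre

theorem Fintype.sum_comp_le_sum_of_injective {ι κ : Type*} [Fintype ι] [Fintype κ] {e : κ → ι}
    (he : Function.Injective e) {f : ι → ℝ} (hf : 0 ≤ f) : ∑ l, f (e l) ≤ ∑ j, f j :=
  calc ∑ l, f (e l) = ∑ j ∈ Finset.univ.map ⟨e, he⟩, f j :=
        (Finset.sum_map Finset.univ ⟨e, he⟩ f).symm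
    _ ≤ ∑ j, f j := Finset.sum_le_univ_sum_of_nonneg hf

namespace Matrix

section Nonneg

variable {ι κ : Type*} [Fintype ι] {P : Matrix ι ι ℝ}

theorem mulVec_mono_of_nonneg (hP : ∀ i j, 0 ≤ P i j) : Monotone (P *ᵥ ·) :=
  fun _ _ huv i => dotProduct_le_dotProduct_of_nonneg_left huv (hP i)

variable [DecidableEq ι]

theorem le_pow_mulVec_of_le_mulVec (hP : ∀ i j, 0 ≤ P i j) {w : ι → ℝ} (hPw : w ≤ P *ᵥ w)
    (k : ℕ) : w ≤ P ^ k *ᵥ w := by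
  induction k with
  | zero => rw [pow_zero, one_mulVec]
  | succ k ih =>
    rw [pow_succ', ← mulVec_mulVec]
    exact hPw.trans (mulVec_mono_of_nonneg hP ih)

theorem eq_zero_of_le_mulVec (hP : ∀ i j, 0 ≤ P i j)
    (hconv : Tendsto (fun k => P ^ k) atTop (𝓝 0)) {w : ι → ℝ} (hw : 0 ≤ w)
    (hPw : w ≤ P *ᵥ w) : w = 0 := by
  have hlim : Tendsto (fun k => P ^ k *ᵥ w) atTop (𝓝 0) := by
    simpa [Function.comp_def] using
      ((continuous_id.matrix_mulVec continuous_const).tendsto 0).comp hconv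
  exact le_antisymm (ge_of_tendsto' hlim (le_pow_mulVec_of_le_mulVec hP hPw)) hw

theorem isUnit_det_one_sub_submatrix [Fintype κ] [DecidableEq κ] (hP : ∀ i j, 0 ≤ P i j)
    (hconv : Tendsto (fun k => P ^ k) atTop (𝓝 0)) {e : κ → ι} (he : Function.Injective e) :
    IsUnit ((1 - P).submatrix e e).det := by
  change IsUnit ((1 : Matrix ι ι ℝ).submatrix e e - P.submatrix e e).det
  rw [submatrix_one e he, isUnit_iff_ne_zero, Ne, ← exists_mulVec_eq_zero_iff]
  rintro ⟨v, hv0, hv⟩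
  have hfix : P.submatrix e e *ᵥ v = v := by
    rw [sub_mulVec, one_mulVec, sub_eq_zero] at hv
    exact hv.symm
  set w := Function.extend e (fun i => |v i|) 0 with hw
  have hwe : ∀ i, w (e i) = |v i| := fun i => he.extend_apply _ _ i
  have hw0 : 0 ≤ w := by
    intro j
    by_cases hj : ∃ i, e i = j
    · obtain ⟨i, rfl⟩ := hj
      simp [hwe]
    · simp [hw, Function.extend_apply' _ _ _ hj]
  have hPw : w ≤ P *ᵥ w := by
    intro j
    by_cases hj : ∃ i, e i = j
    · obtain ⟨i, rfl⟩ := hj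
      calc w (e i) = |(P.submatrix e e *ᵥ v) i| := by rw [hwe, hfix]
        _ ≤ ∑ l, P (e i) (e l) * w (e l) := by
          simp only [hwe, mulVec, dotProduct, submatrix_apply]
          exact (Finset.abs_sum_le_sum_abs _ _).trans_eq
            (Finset.sum_congr rfl fun l _ => by rw [abs_mul, abs_of_nonneg (hP _ _)])
        _ ≤ (P *ᵥ w) (e i) :=
          Fintype.sum_comp_le_sum_of_injective he (f := fun j => P (e i) j * w j)
            fun j => mul_nonneg (hP _ _) (hw0 j)
    · simp only [hw, Function.extend_apply' _ _ _ hj, Pi.zero_apply]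
      exact dotProduct_nonneg_of_nonneg (hP j) hw0
  apply hv0
  funext i
  simpa [hwe] using congrFun (eq_zero_of_le_mulVec hP hconv hw0 hPw) (e i)

end Nonneg

end Matrix

section Schur

variable {n : ℕ} (M : Matrix (Fin (n + 1)) (Fin (n + 1)) ℝ) (k : Fin (n + 1))

theorem mul_apply_eq_add_sum_succAbove (N : Matrix (Fin (n + 1)) (Fin (n + 1)) ℝ)
    (i : Fin (n + 1)) :
    (M * N) i k = M i k * N k k + ∑ j, M i (k.succAbove j) * N (k.succAbove j) k := by
  rw [mul_apply, Fin.sum_univ_succAbove _ k]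

variable {M}

theorem delCol_inv (hM : IsUnit M.det) (hA : IsUnit (delMat M k k).det) :
    delCol M⁻¹ k = -(M⁻¹ k k • ((delMat M k k)⁻¹ *ᵥ delCol M k)) := by
  have hAq : delMat M k k *ᵥ delCol M⁻¹ k = -(M⁻¹ k k • delCol M k) := by
    funext i
    have hrow := mul_apply_eq_add_sum_succAbove M k M⁻¹ (k.succAbove i)
    rw [mul_nonsing_inv M hM, one_apply_ne (Fin.succAbove_ne k i)] at hrow
    simp only [mulVec, dotProduct, delMat, delCol, submatrix_apply, Pi.neg_apply,
      Pi.smul_apply, smul_eq_mul]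
    linarith
  calc delCol M⁻¹ k = (delMat M k k)⁻¹ *ᵥ (delMat M k k *ᵥ delCol M⁻¹ k) := by
        rw [mulVec_mulVec, nonsing_inv_mul _ hA, one_mulVec]
    _ = _ := by rw [hAq, mulVec_neg, mulVec_smul]

theorem inv_apply_self_mul_schur (hM : IsUnit M.det)
    (hA : IsUnit (delMat M k k).det) :
    M⁻¹ k k * (M k k - delRow M k ⬝ᵥ ((delMat M k k)⁻¹ *ᵥ delCol M k)) = 1 := by
  have hrow := mul_apply_eq_add_sum_succAbove M k M⁻¹ k
  rw [mul_nonsing_inv M hM, one_apply_eq] at hrow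
  have hsum : ∑ j, M k (k.succAbove j) * M⁻¹ (k.succAbove j) k
      = -(M⁻¹ k k * (delRow M k ⬝ᵥ ((delMat M k k)⁻¹ *ᵥ delCol M k))) := by
    change delRow M k ⬝ᵥ delCol M⁻¹ k = _
    rw [delCol_inv k hM hA, dotProduct_neg, dotProduct_smul, smul_eq_mul]
  linear_combination -hrow - hsum

end Schur

section OneSub

variable {n : ℕ} {P : Matrix (Fin (n + 1)) (Fin (n + 1)) ℝ} (k : Fin (n + 1))

theorem delCol_one_sub : delCol (1 - P) k = -delCol P k := by
  funext i
  simp [delCol, one_apply_ne (Fin.succAbove_ne k i)]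

theorem delRow_one_sub : delRow (1 - P) k = -delRow P k := by
  funext j
  simp [delRow, one_apply_ne (Fin.succAbove_ne k j).symm]

theorem inv_one_sub_succAbove_apply (hM : IsUnit (1 - P).det)
    (hA : IsUnit (delMat (1 - P) k k).det) (i : Fin n) :
    (1 - P)⁻¹ (k.succAbove i) k = (1 - P)⁻¹ k k * ((delMat (1 - P) k k)⁻¹ *ᵥ delCol P k) i := by
  change delCol (1 - P)⁻¹ k i = _
  simpa [delCol_one_sub, mulVec_neg] using congrFun (delCol_inv k hM hA) i

theorem inv_one_sub_apply_self_mul (hM : IsUnit (1 - P).det)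
    (hA : IsUnit (delMat (1 - P) k k).det) :
    (1 - P)⁻¹ k k * (1 - P k k - delRow P k ⬝ᵥ ((delMat (1 - P) k k)⁻¹ *ᵥ delCol P k)) = 1 := by
  simpa [delCol_one_sub, delRow_one_sub, mulVec_neg] using
    inv_apply_self_mul_schur k hM hA

end OneSub

theorem fSel_dotProduct {n : ℕ} {m k : Fin (n + 1)} {j : Fin n} (hj : k.succAbove j = m)
    (v : Fin n → ℝ) : fSel m k ⬝ᵥ v = v j := by
  have : fSel m k = Pi.single j 1 := by
    funext j'
    simp [fSel, Pi.single_apply, ← hj, Fin.succAbove_right_injective.eq_iff]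
  rw [this, single_one_dotProduct]

theorem substochastic_first_identity_general
    {n : ℕ} (P : Matrix (Fin (n + 1)) (Fin (n + 1)) ℝ)
    (hnonneg : ∀ i j, 0 ≤ P i j)
    (hspec : ∀ μ ∈ spectrum ℂ (P.map (fun x => (x : ℂ))), ‖μ‖ < 1)
    (m : Fin (n + 1)) :
    (delRow P m ⬝ᵥ ((delMat (1 - P) m m)⁻¹ *ᵥ delCol P m)) /
        (1 - P m m - delRow P m ⬝ᵥ ((delMat (1 - P) m m)⁻¹ *ᵥ delCol P m)) =
      ∑ k ∈ Finset.univ.erase m,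
        P k m * (fSel m k ⬝ᵥ ((delMat (1 - P) k k)⁻¹ *ᵥ delCol P k)) /
          (1 - P k k - delRow P k ⬝ᵥ ((delMat (1 - P) k k)⁻¹ *ᵥ delCol P k)) := by
  have hconv := P.tendsto_pow_nhds_zero_of_forall_norm_spectrum_lt_one hspec
  have hM : IsUnit (1 - P).det := by
    simpa using isUnit_det_one_sub_submatrix hnonneg hconv Function.injective_id
  have hA (k : Fin (n + 1)) : IsUnit (delMat (1 - P) k k).det :=
    isUnit_det_one_sub_submatrix hnonneg hconv Fin.succAbove_right_injective
  have hdiag (k : Fin (n + 1)) := inv_one_sub_apply_self_mul k hM (hA k)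
  have hterm : ∀ k ∈ Finset.univ.erase m,
      P k m * (fSel m k ⬝ᵥ ((delMat (1 - P) k k)⁻¹ *ᵥ delCol P k)) /
          (1 - P k k - delRow P k ⬝ᵥ ((delMat (1 - P) k k)⁻¹ *ᵥ delCol P k)) =
        (1 - P)⁻¹ m k * P k m := by
    intro k hk
    obtain ⟨j, hj⟩ := Fin.exists_succAbove_eq (Finset.ne_of_mem_erase hk).symm
    rw [div_eq_mul_inv, inv_eq_of_mul_eq_one_left (hdiag k), fSel_dotProduct hj, ← hj,
      inv_one_sub_succAbove_apply k hM (hA k)]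
    ring
  have hQP : (1 - P)⁻¹ * P = (1 - P)⁻¹ - 1 := by
    have h := nonsing_inv_mul _ hM
    rw [Matrix.mul_sub, Matrix.mul_one] at h
    calc (1 - P)⁻¹ * P = (1 - P)⁻¹ - ((1 - P)⁻¹ - (1 - P)⁻¹ * P) := (sub_sub_cancel _ _).symm
      _ = (1 - P)⁻¹ - 1 := by rw [h]
  rw [Finset.sum_congr rfl hterm, Finset.sum_erase_eq_sub (Finset.mem_univ m), ← mul_apply, hQP,
    div_eq_mul_inv, inv_eq_of_mul_eq_one_left (hdiag m), Matrix.sub_apply, one_apply_eq]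
  linear_combination -hdiag m

/-- For a row substochastic matrix `P` with spectral radius less than
one and every index `m`:
`p_{m·}((I−P)(m|m))⁻¹p_{·m} / (1 − p_{mm} − p_{m·}((I−P)(m|m))⁻¹p_{·m})
  = ∑_{k≠m} p_{km} f_{mk}((I−P)(k|k))⁻¹p_{·k} / (1 − p_{kk} − p_{k·}((I−P)(k|k))⁻¹p_{·k})`. -/
theorem substochastic_first_identity
    {n : ℕ} (P : Matrix (Fin (n + 1)) (Fin (n + 1)) ℝ)
    (hnonneg : ∀ i j, 0 ≤ P i j)
    (hrowsum : ∀ i, ∑ j, P i j ≤ 1)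
    (hspec : ∀ μ ∈ spectrum ℂ (P.map (fun x => (x : ℂ))), ‖μ‖ < 1)
    (m : Fin (n + 1)) :
    (delRow P m ⬝ᵥ ((delMat (1 - P) m m)⁻¹ *ᵥ delCol P m)) /
        (1 - P m m - delRow P m ⬝ᵥ ((delMat (1 - P) m m)⁻¹ *ᵥ delCol P m)) =
      ∑ k ∈ Finset.univ.erase m,
        P k m * (fSel m k ⬝ᵥ ((delMat (1 - P) k k)⁻¹ *ᵥ delCol P k)) /
          (1 - P k k - delRow P k ⬝ᵥ ((delMat (1 - P) k k)⁻¹ *ᵥ delCol P k)) :=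
  substochastic_first_identity_general P hnonneg hspec m
end

section
/- Let B = (b_{ij}) be an n×n real matrix all of whose principal minors are nonzero (in particular det(B) ≠ 0 and det(B(l|l)) ≠ 0 for every l). Then for every index m: b_{m·}(B(m|m))⁻¹ b_{·m} / (b_{mm} − b_{m·}(B(m|m))⁻¹ b_{·m}) = Σ_{l≠m} b_{lm} f_{ml}(B(l|l))⁻¹ b_{·l} / (b_{ll} − b_{l·}(B(l|l))⁻¹ b_{·l}). -/
/-!
Write `x_l = B(l|l)⁻¹b_{·l}` and `d_l = b_{ll} − b_{l·}x_l`. The vector with `l`-th entry `1`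
and remaining entries `−x_l` is mapped by `B` to `d_l e_l`, so the `l`-th column of `B⁻¹` is
that vector divided by `d_l`. Hence the left-hand side is `b_{mm}(B⁻¹)_{mm} − 1`, the `l`-th
summand is `−(B⁻¹)_{ml} b_{lm}`, and the identity is the `(m, m)` entry of `B⁻¹B = 1`.
-/

open Matrix

theorem Matrix.det_submatrix_univ_coe {ι R : Type*} [Fintype ι] [DecidableEq ι] [CommRing R]
    (A : Matrix ι ι R) :
    (A.submatrix (fun i : (Finset.univ : Finset ι) => (i : ι))
      (fun j : (Finset.univ : Finset ι) => (j : ι))).det = A.det :=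
  det_submatrix_equiv_self (Equiv.subtypeUnivEquiv Finset.mem_univ) A

theorem det_delMat_self {n : ℕ} (B : Matrix (Fin (n + 1)) (Fin (n + 1)) ℝ) (l : Fin (n + 1)) :
    (delMat B l l).det =
      (B.submatrix (fun i : ({l}ᶜ : Finset (Fin (n + 1))) => (i : Fin (n + 1)))
        (fun j : ({l}ᶜ : Finset (Fin (n + 1))) => (j : Fin (n + 1)))).det := by
  let e : Fin n ≃ ({l}ᶜ : Finset (Fin (n + 1))) :=
    (finSuccAboveEquiv l).trans (Equiv.subtypeEquivRight fun x => by simp)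
  exact det_submatrix_equiv_self e (B.submatrix (↑) (↑))

theorem Matrix.dotProduct_insertNth {R : Type*} [NonUnitalNonAssocSemiring R] {n : ℕ}
    (u : Fin (n + 1) → R) (l : Fin (n + 1)) (a : R) (w : Fin n → R) :
    u ⬝ᵥ Fin.insertNth l a w = u l * a + (fun i => u (l.succAbove i)) ⬝ᵥ w := by
  simp only [dotProduct, Fin.sum_univ_succAbove _ l, Fin.insertNth_apply_same,
    Fin.insertNth_apply_succAbove]

theorem fSel_succAbove {n : ℕ} (l : Fin (n + 1)) (j : Fin n) :
    fSel (l.succAbove j) l = Pi.single j 1 := by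
  ext i
  simp only [fSel, Fin.succAbove_right_inj, Pi.single_apply]

section SchurComplement

variable {n : ℕ} (B : Matrix (Fin (n + 1)) (Fin (n + 1)) ℝ) (l : Fin (n + 1))

noncomputable def schurCompl : ℝ :=
  B l l - delRow B l ⬝ᵥ ((delMat B l l)⁻¹ *ᵥ delCol B l)

noncomputable def schurVec : Fin (n + 1) → ℝ :=
  Fin.insertNth l 1 (-((delMat B l l)⁻¹ *ᵥ delCol B l))

variable {B l}

theorem mulVec_schurVec (hl : (delMat B l l).det ≠ 0) :
    B *ᵥ schurVec B l = Pi.single l (schurCompl B l) := by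
  ext k
  rw [mulVec, schurVec, dotProduct_insertNth, mul_one, dotProduct_neg]
  rcases eq_or_ne k l with rfl | hk
  · rw [Pi.single_eq_same, schurCompl, sub_eq_add_neg]
    rfl
  · obtain ⟨i, rfl⟩ := Fin.exists_succAbove_eq hk
    have hsolve : delMat B l l *ᵥ ((delMat B l l)⁻¹ *ᵥ delCol B l) = delCol B l := by
      rw [mulVec_mulVec, mul_nonsing_inv _ (isUnit_iff_ne_zero.mpr hl), one_mulVec]
    rw [Pi.single_eq_of_ne hk]
    exact add_neg_eq_zero.mpr (congrFun hsolve i).symm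

theorem inv_apply_mul_schurCompl (hB : B.det ≠ 0) (hl : (delMat B l l).det ≠ 0)
    (k : Fin (n + 1)) : B⁻¹ k l * schurCompl B l = schurVec B l k := by
  have h := congrArg (B⁻¹ *ᵥ ·) (mulVec_schurVec hl)
  simp only [mulVec_mulVec, nonsing_inv_mul _ (isUnit_iff_ne_zero.mpr hB), one_mulVec,
    mulVec_single] at h
  exact (congrFun h k).symm

theorem inv_apply_self_mul_schurCompl (hB : B.det ≠ 0) (hl : (delMat B l l).det ≠ 0) :
    B⁻¹ l l * schurCompl B l = 1 := by
  rw [inv_apply_mul_schurCompl hB hl, schurVec, Fin.insertNth_apply_same]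

theorem schurCompl_ne_zero (hB : B.det ≠ 0) (hl : (delMat B l l).det ≠ 0) :
    schurCompl B l ≠ 0 :=
  right_ne_zero_of_mul_eq_one (inv_apply_self_mul_schurCompl hB hl)

theorem delRow_dotProduct_div_schurCompl (hB : B.det ≠ 0) (hl : (delMat B l l).det ≠ 0) :
    delRow B l ⬝ᵥ ((delMat B l l)⁻¹ *ᵥ delCol B l) / schurCompl B l = B l l * B⁻¹ l l - 1 := by
  rw [div_eq_iff (schurCompl_ne_zero hB hl)]
  have h := inv_apply_self_mul_schurCompl hB hl
  rw [schurCompl] at h ⊢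
  linear_combination (-B l l) * h

theorem mul_fSel_dotProduct_div_schurCompl (hB : B.det ≠ 0) (hl : (delMat B l l).det ≠ 0)
    {m : Fin (n + 1)} (hml : m ≠ l) :
    B l m * (fSel m l ⬝ᵥ ((delMat B l l)⁻¹ *ᵥ delCol B l)) / schurCompl B l =
      -(B⁻¹ m l * B l m) := by
  obtain ⟨j, rfl⟩ := Fin.exists_succAbove_eq hml
  have h := inv_apply_mul_schurCompl hB hl (l.succAbove j)
  rw [schurVec, Fin.insertNth_apply_succAbove, Pi.neg_apply] at h
  rw [fSel_succAbove, single_one_dotProduct, div_eq_iff (schurCompl_ne_zero hB hl)]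
  linear_combination B l (l.succAbove j) * h

end SchurComplement

/-- For an `(n+1) × (n+1)` real matrix `B` all of whose principal
minors are nonzero, and every index `m`:
`b_{m·}(B(m|m))⁻¹b_{·m} / (b_{mm} − b_{m·}(B(m|m))⁻¹b_{·m})
  = ∑_{l≠m} b_{lm} f_{ml}(B(l|l))⁻¹b_{·l} / (b_{ll} − b_{l·}(B(l|l))⁻¹b_{·l})`. -/
theorem first_identity_of_nonzero_principal_minors
    {n : ℕ} (B : Matrix (Fin (n + 1)) (Fin (n + 1)) ℝ)
    (hpm : ∀ S : Finset (Fin (n + 1)),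
      (B.submatrix (fun i : S => (i : Fin (n + 1))) (fun j : S => (j : Fin (n + 1)))).det ≠ 0)
    (m : Fin (n + 1)) :
    (delRow B m ⬝ᵥ ((delMat B m m)⁻¹ *ᵥ delCol B m)) /
        (B m m - delRow B m ⬝ᵥ ((delMat B m m)⁻¹ *ᵥ delCol B m)) =
      ∑ l ∈ Finset.univ.erase m,
        B l m * (fSel m l ⬝ᵥ ((delMat B l l)⁻¹ *ᵥ delCol B l)) /
          (B l l - delRow B l ⬝ᵥ ((delMat B l l)⁻¹ *ᵥ delCol B l)) := by
  have hB : B.det ≠ 0 := det_submatrix_univ_coe B ▸ hpm Finset.univ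
  have hdel (l : Fin (n + 1)) : (delMat B l l).det ≠ 0 := det_delMat_self B l ▸ hpm {l}ᶜ
  have hinv : ∑ l, B⁻¹ m l * B l m = 1 := by
    rw [← mul_apply, nonsing_inv_mul B (isUnit_iff_ne_zero.mpr hB), one_apply_eq]
  change _ / schurCompl B m = ∑ l ∈ _, _ / schurCompl B l
  rw [delRow_dotProduct_div_schurCompl hB (hdel m),
    Finset.sum_congr rfl fun l hl =>
      mul_fSel_dotProduct_div_schurCompl hB (hdel l) (Finset.ne_of_mem_erase hl).symm,
    Finset.sum_neg_distrib, Finset.sum_erase_eq_sub (Finset.mem_univ m), hinv]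
  ring
end

section
/- Let B = (b_{ij}) be an n×n real matrix all of whose principal minors are nonzero (in particular det(B) ≠ 0 and det(B(l|l)) ≠ 0 for every l). Then for all indices l ≠ m: − b_{mm} f_{lm}(B(m|m))⁻¹ b_{·m} / (b_{mm} − b_{m·}(B(m|m))⁻¹ b_{·m}) = − b_{lm} / (b_{ll} − b_{l·}(B(l|l))⁻¹ b_{·l}) + Σ_{k≠l, k≠m} b_{km} f_{lk}(B(k|k))⁻¹ b_{·k} / (b_{kk} − b_{k·}(B(k|k))⁻¹ b_{·k}). -/
open Matrix

/-!
Write `x_k = B(k|k)⁻¹ b_{·k}` and `d_k = b_{kk} − b_{k·} x_k`. The vector with `k`-th entry `1`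
and remaining entries `−x_k` is sent by `B` to `d_k e_k`, so the `k`-th column of `B⁻¹` is that
vector divided by `d_k`: `(B⁻¹)_{kk} = 1 / d_k` and `(B⁻¹)_{lk} = −f_{lk} x_k / d_k` for `l ≠ k`.
The identity is the vanishing of `(B⁻¹ B)_{lm} = ∑_k (B⁻¹)_{lk} b_{km}` with the terms `k = l`
and `k = m` taken out of the sum.
-/

namespace Matrix

variable {ι R : Type*} [Fintype ι] [DecidableEq ι] [CommRing R]

def PrincipalMinorsNeZero (B : Matrix ι ι R) : Prop :=
  ∀ S : Finset ι, (B.submatrix (fun i : S => (i : ι)) (fun j : S => (j : ι))).det ≠ 0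

theorem PrincipalMinorsNeZero.det_ne_zero {B : Matrix ι ι R} (hB : B.PrincipalMinorsNeZero) :
    B.det ≠ 0 := by
  rw [← det_submatrix_equiv_self (Equiv.subtypeUnivEquiv Finset.mem_univ) B]
  exact hB Finset.univ

theorem PrincipalMinorsNeZero.det_delMat_ne_zero {n : ℕ}
    {B : Matrix (Fin (n + 1)) (Fin (n + 1)) ℝ} (hB : B.PrincipalMinorsNeZero) (k : Fin (n + 1)) :
    (delMat B k k).det ≠ 0 := by
  let e : Fin n ≃ Finset.univ.erase k :=
    (finSuccAboveEquiv k).trans (Equiv.subtypeEquivRight fun _ => by simp)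
  rw [show delMat B k k = (B.submatrix (fun i : Finset.univ.erase k => (i : Fin (n + 1)))
      (fun j : Finset.univ.erase k => (j : Fin (n + 1)))).submatrix e e from rfl,
    det_submatrix_equiv_self]
  exact hB _

end Matrix

section SchurPivot

variable {n : ℕ} (B : Matrix (Fin (n + 1)) (Fin (n + 1)) ℝ) (k : Fin (n + 1))

noncomputable def pivotSolution : Fin n → ℝ := (delMat B k k)⁻¹ *ᵥ delCol B k

noncomputable def schurPivot : ℝ := B k k - delRow B k ⬝ᵥ pivotSolution B k

noncomputable def pivotVector : Fin (n + 1) → ℝ := Fin.insertNth k 1 (-pivotSolution B k)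

theorem fSel_succAbove_dotProduct (j : Fin n) (v : Fin n → ℝ) :
    fSel (k.succAbove j) k ⬝ᵥ v = v j := by
  simp [fSel, dotProduct, Fin.succAbove_right_injective.eq_iff]

variable {B k}

theorem mulVec_pivotVector (hk : IsUnit (delMat B k k).det) :
    B *ᵥ pivotVector B k = Pi.single k (schurPivot B k) := by
  have hsolve : delMat B k k *ᵥ pivotSolution B k = delCol B k := by
    rw [pivotSolution, mulVec_mulVec, mul_nonsing_inv _ hk, one_mulVec]
  ext i
  rw [mulVec, dotProduct, Fin.sum_univ_succAbove _ k, pivotVector]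
  simp only [Fin.insertNth_apply_same, Fin.insertNth_apply_succAbove, Pi.neg_apply, mul_one,
    mul_neg, Finset.sum_neg_distrib, ← sub_eq_add_neg]
  induction i using Fin.succAboveCases k with
  | x => simp [schurPivot, delRow, dotProduct]
  | p i =>
    have := congrFun hsolve i
    simp only [mulVec, dotProduct, delMat, delCol, submatrix_apply] at this
    simp [this, Fin.succAbove_ne]

theorem inv_apply_mul_schurPivot_eq_pivotVector (hB : IsUnit B.det) (hk : IsUnit (delMat B k k).det)
    (l : Fin (n + 1)) :
    B⁻¹ l k * schurPivot B k = pivotVector B k l := by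
  have := congrArg (B⁻¹ *ᵥ ·) (mulVec_pivotVector hk)
  simp only [mulVec_mulVec, nonsing_inv_mul _ hB, one_mulVec] at this
  rw [this]
  simp [mul_comm]

theorem inv_apply_self_mul_schurPivot (hB : IsUnit B.det) (hk : IsUnit (delMat B k k).det) :
    B⁻¹ k k * schurPivot B k = 1 := by
  rw [inv_apply_mul_schurPivot_eq_pivotVector hB hk, pivotVector, Fin.insertNth_apply_same]

theorem inv_apply_self_eq_inv_schurPivot (hB : IsUnit B.det) (hk : IsUnit (delMat B k k).det) :
    B⁻¹ k k = (schurPivot B k)⁻¹ :=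
  eq_inv_of_mul_eq_one_left (inv_apply_self_mul_schurPivot hB hk)

theorem schurPivot_ne_zero (hB : IsUnit B.det) (hk : IsUnit (delMat B k k).det) :
    schurPivot B k ≠ 0 :=
  right_ne_zero_of_mul_eq_one (inv_apply_self_mul_schurPivot hB hk)

theorem inv_apply_eq_neg_fSel_dotProduct_div (hB : IsUnit B.det)
    (hk : IsUnit (delMat B k k).det) {l : Fin (n + 1)} (hlk : l ≠ k) :
    B⁻¹ l k = -(fSel l k ⬝ᵥ pivotSolution B k) / schurPivot B k := by
  obtain ⟨j, rfl⟩ := Fin.exists_succAbove_eq hlk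
  rw [eq_div_iff (schurPivot_ne_zero hB hk), inv_apply_mul_schurPivot_eq_pivotVector hB hk,
    pivotVector, Fin.insertNth_apply_succAbove, fSel_succAbove_dotProduct, Pi.neg_apply]

end SchurPivot

/-- For an `(n+1) × (n+1)` real matrix `B` all of whose principal
minors are nonzero, and indices `l ≠ m`:
`− b_{mm} f_{lm}(B(m|m))⁻¹b_{·m} / (b_{mm} − b_{m·}(B(m|m))⁻¹b_{·m})
  = − b_{lm} / (b_{ll} − b_{l·}(B(l|l))⁻¹b_{·l})
    + ∑_{k≠l,k≠m} b_{km} f_{lk}(B(k|k))⁻¹b_{·k} / (b_{kk} − b_{k·}(B(k|k))⁻¹b_{·k})`. -/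
theorem second_identity_of_nonzero_principal_minors
    {n : ℕ} (B : Matrix (Fin (n + 1)) (Fin (n + 1)) ℝ)
    (hpm : ∀ S : Finset (Fin (n + 1)),
      (B.submatrix (fun i : S => (i : Fin (n + 1))) (fun j : S => (j : Fin (n + 1)))).det ≠ 0)
    (l m : Fin (n + 1)) (hlm : l ≠ m) :
    -(B m m * (fSel l m ⬝ᵥ ((delMat B m m)⁻¹ *ᵥ delCol B m))) /
        (B m m - delRow B m ⬝ᵥ ((delMat B m m)⁻¹ *ᵥ delCol B m)) =
      -(B l m) / (B l l - delRow B l ⬝ᵥ ((delMat B l l)⁻¹ *ᵥ delCol B l)) +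
        ∑ k ∈ (Finset.univ.erase l).erase m,
          B k m * (fSel l k ⬝ᵥ ((delMat B k k)⁻¹ *ᵥ delCol B k)) /
            (B k k - delRow B k ⬝ᵥ ((delMat B k k)⁻¹ *ᵥ delCol B k)) := by
  have hB : IsUnit B.det := (PrincipalMinorsNeZero.det_ne_zero hpm).isUnit
  have hk k : IsUnit (delMat B k k).det := (PrincipalMinorsNeZero.det_delMat_ne_zero hpm k).isUnit
  have horth : ∑ k, B⁻¹ l k * B k m = 0 := by
    simpa [mul_apply, one_apply_ne hlm] using congrFun (congrFun (nonsing_inv_mul B hB) l) m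
  rw [← Finset.add_sum_erase _ _ (Finset.mem_univ l),
    ← Finset.add_sum_erase _ _ (Finset.mem_erase.2 ⟨hlm.symm, Finset.mem_univ m⟩)] at horth
  change -(B m m * (fSel l m ⬝ᵥ pivotSolution B m)) / schurPivot B m =
    -(B l m) / schurPivot B l +
      ∑ k ∈ (Finset.univ.erase l).erase m, B k m * (fSel l k ⬝ᵥ pivotSolution B k) / schurPivot B k
  calc _ = B m m * B⁻¹ l m := by rw [inv_apply_eq_neg_fSel_dotProduct_div hB (hk m) hlm]; ring
    _ = -(B⁻¹ l l * B l m) + ∑ k ∈ (Finset.univ.erase l).erase m, -(B⁻¹ l k * B k m) := by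
      rw [Finset.sum_neg_distrib]; linear_combination horth
    _ = _ := by
      congr 1
      · rw [inv_apply_self_eq_inv_schurPivot hB (hk l)]; ring
      refine Finset.sum_congr rfl fun k hkS => ?_
      have hlk : l ≠ k := (Finset.ne_of_mem_erase (Finset.mem_of_mem_erase hkS)).symm
      rw [inv_apply_eq_neg_fSel_dotProduct_div hB (hk k) hlk]
      ring
end

section
/- Let B = (b_{ij}) be an n×n real matrix and let l ≠ m be indices. Then f_{ml} · adj(B(l|l)) · b_{·l} = (−1)^{m+l+1} det(B(l|m)). -/
open Matrix

/-!
Let `G` be `B` with column `m` replaced by column `l`. By Cramer's rule the left-hand side is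
`det G(l|l)`, i.e. the cofactor `adj G l l`. Since `G` has equal columns `l` and `m`, the
cofactors `adj G l l` and `adj G m l` cancel, and `adj G m l = (-1)^(l+m) det B(l|m)`
because deleting column `m` of `G` forgets the replacement.
-/

/-- Both cofactors come from the matrix with `eⱼ + eₖ` in row `i`, whose columns `j` and `k`
are equal. -/
theorem Matrix.adjugate_add_adjugate_eq_zero_of_col_eq {ι R : Type*} [Fintype ι] [DecidableEq ι]
    [CommRing R] (A : Matrix ι ι R) {j k : ι} (hjk : j ≠ k) (hcol : ∀ r, A r j = A r k) (i : ι) :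
    A.adjugate j i + A.adjugate k i = 0 := by
  rw [adjugate_apply, adjugate_apply, ← det_updateRow_add]
  refine det_zero_of_column_eq hjk fun r => ?_
  by_cases hr : r = i
  · subst hr
    simp [hjk, hjk.symm]
  · simp [updateRow_ne hr, hcol r]

theorem Matrix.submatrix_updateCol_of_injective {κ ι μ ν α : Type*} [DecidableEq ι]
    [DecidableEq ν] (A : Matrix μ ι α) (r : κ → μ) {f : ν → ι} (hf : Function.Injective f)
    (j : ν) (c : μ → α) :
    (A.updateCol (f j) c).submatrix r f = (A.submatrix r f).updateCol j (c ∘ r) := by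
  ext a b
  simp only [submatrix_apply, updateCol_apply, hf.eq_iff, Function.comp_apply]

theorem fSel_dotProduct_s8 {n : ℕ} {m l : Fin (n + 1)} {j : Fin n} (h : l.succAbove j = m)
    (w : Fin n → ℝ) : fSel m l ⬝ᵥ w = w j := by
  rw [dotProduct, Fintype.sum_eq_single j fun k hk => ?_]
  · simp [fSel, h]
  · simp [fSel, ← h, Fin.succAbove_right_injective.ne hk]

/-- For an `(n+1) × (n+1)` real matrix `B` and indices `l ≠ m`:
`f_{ml} · adj(B(l|l)) · b_{·l} = (−1)^{m+l+1} det B(l|m)`. -/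
theorem fSel_adjugate_delCol_eq
    {n : ℕ} (B : Matrix (Fin (n + 1)) (Fin (n + 1)) ℝ)
    (l m : Fin (n + 1)) (hlm : l ≠ m) :
    fSel m l ⬝ᵥ ((delMat B l l).adjugate *ᵥ delCol B l) =
      (-1 : ℝ) ^ ((m : ℕ) + (l : ℕ) + 1) * (delMat B l m).det := by
  obtain ⟨j, hj⟩ := Fin.exists_succAbove_eq hlm.symm
  set G := B.updateCol m (fun i => B i l) with hG
  have hcramer : (delMat B l l).updateCol j (delCol B l) = delMat G l l := by
    rw [delMat, delMat, hG, ← hj,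
      submatrix_updateCol_of_injective _ _ Fin.succAbove_right_injective]
    rfl
  calc fSel m l ⬝ᵥ ((delMat B l l).adjugate *ᵥ delCol B l)
      = ((delMat B l l).adjugate *ᵥ delCol B l) j := fSel_dotProduct_s8 hj _
    _ = (delMat G l l).det := by rw [← cramer_eq_adjugate_mulVec, cramer_apply, hcramer]
    _ = G.adjugate l l := by
      rw [adjugate_fin_succ_eq_det_submatrix, ← two_mul, pow_mul, neg_one_sq, one_pow, one_mul,
        delMat]
    _ = -G.adjugate m l := eq_neg_of_add_eq_zero_left <|
      G.adjugate_add_adjugate_eq_zero_of_col_eq hlm (fun r => by simp [hG, hlm]) l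
    _ = (-1 : ℝ) ^ ((m : ℕ) + (l : ℕ) + 1) * (delMat B l m).det := by
      rw [adjugate_fin_succ_eq_det_submatrix, submatrix_updateCol_succAbove, delMat]
      ring
end

section
/- Let B = (b_{ij}) be an n×n real matrix. Then for every index m: b_{m·} · adj(B(m|m)) · b_{·m} = Σ_{l≠m} b_{lm} f_{ml} · adj(B(l|l)) · b_{·l}, and both sides equal −det(B) + b_{mm} det(B(m|m)). -/
open Matrix

/-!
By Cramer's rule, the `j`-th entry of `adj(B(l|l)) b_{·l}` is the determinant of `B(l|l)` with
its `j`-th column replaced by `b_{·l}`. That matrix is `B(l|q)`, where `q = l.succAbove j`, with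
its columns permuted by two cyclic shifts, so the entry is `-(-1)^(l+q) det B(l|q)`. After this
substitution, the left-hand side is minus the Laplace expansion of `det B` along row `m` with the
diagonal term removed. The sum is the same thing along column `m`.
-/

theorem Fin.val_predAbove_add_val_add_one {n : ℕ} (i : Fin (n + 2)) (j : Fin (n + 1)) :
    (j.predAbove i : ℕ) + j + 1 = i + i.succAbove j := by
  simp only [Fin.succAbove, Fin.predAbove, Fin.lt_def, Fin.val_castSucc, apply_dite Fin.val,
    Fin.val_pred, Fin.coe_castPred, dite_eq_ite, apply_ite Fin.val, Fin.val_succ]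
  split_ifs <;> omega

theorem Matrix.det_updateCol_submatrix_succAbove {R : Type*} [CommRing R] {n : ℕ}
    (A : Matrix (Fin (n + 1)) (Fin (n + 2)) R) (i : Fin (n + 2)) (j : Fin (n + 1)) :
    det ((A.submatrix id i.succAbove).updateCol j (fun r => A r i)) =
      -(-1) ^ ((i : ℕ) + i.succAbove j) * det (A.submatrix id (i.succAbove j).succAbove) := by
  set k := j.predAbove i
  have hcols : (A.submatrix id i.succAbove).updateCol j (fun r => A r i) =
      (A.submatrix id (i.succAbove j).succAbove).submatrix id
        (k.cycleRange.symm * j.cycleRange) := by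
    ext r c
    rcases eq_or_ne c j with rfl | hc
    · simp [k, Fin.succAbove_succAbove_predAbove]
    · obtain ⟨c, rfl⟩ := Fin.exists_succAbove_eq hc
      simp [hc, k, Fin.succAbove_succAbove_succAbove_predAbove]
  rw [hcols, det_permute', Equiv.Perm.sign_mul, Equiv.Perm.sign_symm, Fin.sign_cycleRange,
    Fin.sign_cycleRange, ← Fin.val_predAbove_add_val_add_one]
  push_cast
  ring

theorem adjugate_delMat_mulVec_delCol {n : ℕ} (B : Matrix (Fin (n + 1)) (Fin (n + 1)) ℝ)
    (l : Fin (n + 1)) (j : Fin n) :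
    ((delMat B l l).adjugate *ᵥ delCol B l) j =
      -(-1) ^ ((l : ℕ) + l.succAbove j) * det (delMat B l (l.succAbove j)) := by
  cases n with
  | zero => exact j.elim0
  | succ n =>
    rw [← cramer_eq_adjugate_mulVec, cramer_apply]
    exact det_updateCol_submatrix_succAbove (B.submatrix l.succAbove id) l j

theorem fSel_eq_single {n : ℕ} {m l : Fin (n + 1)} {j : Fin n} (h : l.succAbove j = m) :
    fSel m l = Pi.single j 1 := by
  ext k
  rcases eq_or_ne k j with rfl | hk
  · simp [fSel, h]
  · simp [fSel, hk, ← h, Fin.succAbove_right_injective.ne hk]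

theorem delRow_dotProduct_adjugate_mulVec_delCol {n : ℕ}
    (B : Matrix (Fin (n + 1)) (Fin (n + 1)) ℝ) (m : Fin (n + 1)) :
    delRow B m ⬝ᵥ ((delMat B m m).adjugate *ᵥ delCol B m) =
      -B.det + B m m * (delMat B m m).det := by
  have hdet : B.det - B m m * det (delMat B m m) =
      ∑ j, (-1) ^ ((m : ℕ) + m.succAbove j) * B m (m.succAbove j) *
        det (delMat B m (m.succAbove j)) := by
    rw [det_succ_row B m, Fin.sum_univ_succAbove _ m, ← two_mul, pow_mul, neg_one_sq, one_pow,
      one_mul]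
    exact add_sub_cancel_left _ _
  rw [neg_add_eq_sub, ← neg_sub, hdet, ← Finset.sum_neg_distrib]
  refine Finset.sum_congr rfl fun j _ => ?_
  rw [delRow, adjugate_delMat_mulVec_delCol]
  ring

theorem sum_mul_fSel_dotProduct_adjugate_mulVec_delCol {n : ℕ}
    (B : Matrix (Fin (n + 1)) (Fin (n + 1)) ℝ) (m : Fin (n + 1)) :
    ∑ l ∈ Finset.univ.erase m,
        B l m * (fSel m l ⬝ᵥ ((delMat B l l).adjugate *ᵥ delCol B l)) =
      -B.det + B m m * (delMat B m m).det := by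
  have hdet : B.det - B m m * det (delMat B m m) =
      ∑ l ∈ Finset.univ.erase m, (-1) ^ ((l : ℕ) + m) * B l m * det (delMat B l m) := by
    rw [det_succ_column B m, ← Finset.add_sum_erase _ _ (Finset.mem_univ m), ← two_mul, pow_mul,
      neg_one_sq, one_pow, one_mul]
    exact add_sub_cancel_left _ _
  rw [neg_add_eq_sub, ← neg_sub, hdet, ← Finset.sum_neg_distrib]
  refine Finset.sum_congr rfl fun l hl => ?_
  obtain ⟨j, hj⟩ := Fin.exists_succAbove_eq (Finset.ne_of_mem_erase hl).symm
  rw [fSel_eq_single hj, single_one_dotProduct, adjugate_delMat_mulVec_delCol, hj]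
  ring

/-- For an `(n+1) × (n+1)` real matrix `B` and every index `m`:
`b_{m·} · adj(B(m|m)) · b_{·m} = ∑_{l≠m} b_{lm} f_{ml} · adj(B(l|l)) · b_{·l}`,
and both sides equal `−det B + b_{mm} det B(m|m)`. -/
theorem row_adjugate_col_eq_sum_and_det
    {n : ℕ} (B : Matrix (Fin (n + 1)) (Fin (n + 1)) ℝ) (m : Fin (n + 1)) :
    delRow B m ⬝ᵥ ((delMat B m m).adjugate *ᵥ delCol B m) =
        ∑ l ∈ Finset.univ.erase m,
          B l m * (fSel m l ⬝ᵥ ((delMat B l l).adjugate *ᵥ delCol B l)) ∧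
      delRow B m ⬝ᵥ ((delMat B m m).adjugate *ᵥ delCol B m) =
        -B.det + B m m * (delMat B m m).det :=
  ⟨(delRow_dotProduct_adjugate_mulVec_delCol B m).trans
      (sum_mul_fSel_dotProduct_adjugate_mulVec_delCol B m).symm,
    delRow_dotProduct_adjugate_mulVec_delCol B m⟩
end
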